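/- arXiv:0906.4128 — 2 statements merged into one kernel-verified Lean document; each statement's English description precedes it below -/
import Mathlib

section
/- Let (A, μ, Δ, α, c) be a Hom-bialgebra with weak unit c, and let R = Σ sᵢ ⊗ tᵢ ∈ A ⊗ A satisfy (α ⊗ α)(R) = R (α-invariance). If R satisfies the axioms (Δ ⊗ α)(R) = R₁₃R₂₃, (α ⊗ Δ)(R) = R₁₃R₁₂, and ((τ∘Δ)(x))R = RΔ(x) for all x, then the two quantum Hom-Yang-Baxter expressions coincide: (R₁₂ R₁₃) R₂₃ = R₁₂ (R₁₃ R₂₃) and R₂₃ (R₁₃ R₁₂) = (R₂₃ R₁₃) R₁₂ in A ⊗ A ⊗ A. -/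
/-!
On pure tensors the weak unit `c` turns every product with `c` into an application of `α`, so
`(R₁₂R₁₃)R₂₃` and `R₁₂(R₁₃R₂₃)` become `α(sⱼsᵢ) ⊗ α(tⱼ)sₖ ⊗ α(tᵢ)tₖ` and
`sⱼα(sᵢ) ⊗ tⱼα(sₖ) ⊗ α(tᵢtₖ)`. By multiplicativity of `α` the first with `(α ⊗ α)` applied to its
third factor equals the second with `(α ⊗ α)` applied to its first factor; this is an identity in
three independent tensors, and `α`-invariance of `R` removes both twists. The same works for the
mirrored expressions.
-/

open TensorProduct

variable {k : Type*} [CommRing k] {A : Type*} [AddCommGroup A] [Module k A]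

/-- Componentwise product on `A ⊗ A` induced by a bilinear multiplication `μ`. -/
noncomputable def mulT2 (μ : A →ₗ[k] A →ₗ[k] A) (X Y : A ⊗[k] A) : A ⊗[k] A :=
  ((TensorProduct.map (TensorProduct.lift μ) (TensorProduct.lift μ)) ∘ₗ
    (TensorProduct.tensorTensorTensorComm k A A A A).toLinearMap) (X ⊗ₜ[k] Y)

/-- Componentwise product on `(A ⊗ A) ⊗ A` induced by `μ`. -/
noncomputable def mulT3 (μ : A →ₗ[k] A →ₗ[k] A) (X Y : (A ⊗[k] A) ⊗[k] A) :
    (A ⊗[k] A) ⊗[k] A :=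
  ((TensorProduct.map
      ((TensorProduct.map (TensorProduct.lift μ) (TensorProduct.lift μ)) ∘ₗ
        (TensorProduct.tensorTensorTensorComm k A A A A).toLinearMap)
      (TensorProduct.lift μ)) ∘ₗ
    (TensorProduct.tensorTensorTensorComm k (A ⊗[k] A) A (A ⊗[k] A) A).toLinearMap)
    (X ⊗ₜ[k] Y)

/-- `R₁₂ = R ⊗ c`. -/
noncomputable def R12e (c : A) (R : A ⊗[k] A) : (A ⊗[k] A) ⊗[k] A := R ⊗ₜ[k] c

/-- `R₂₃ = c ⊗ R`. -/
noncomputable def R23e (c : A) (R : A ⊗[k] A) : (A ⊗[k] A) ⊗[k] A :=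
  (TensorProduct.assoc k A A A).symm (c ⊗ₜ[k] R)

/-- `R₁₃ = (τ ⊗ Id)(R₂₃)`. -/
noncomputable def R13e (c : A) (R : A ⊗[k] A) : (A ⊗[k] A) ⊗[k] A :=
  TensorProduct.map (TensorProduct.comm k A A).toLinearMap LinearMap.id (R23e c R)

section

variable (μ : A →ₗ[k] A →ₗ[k] A) (c : A)

@[simp]
lemma mulT3_tmul (a b e x y z : A) :
    mulT3 μ ((a ⊗ₜ[k] b) ⊗ₜ[k] e) ((x ⊗ₜ[k] y) ⊗ₜ[k] z)
      = (μ a x ⊗ₜ[k] μ b y) ⊗ₜ[k] μ e z := by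
  simp [mulT3]

lemma mulT3_add_left (X X' Y : (A ⊗[k] A) ⊗[k] A) :
    mulT3 μ (X + X') Y = mulT3 μ X Y + mulT3 μ X' Y := by
  simp [mulT3, add_tmul]

lemma mulT3_add_right (X Y Y' : (A ⊗[k] A) ⊗[k] A) :
    mulT3 μ X (Y + Y') = mulT3 μ X Y + mulT3 μ X Y' := by
  simp [mulT3, tmul_add]

@[simp]
lemma R12e_tmul (x y : A) : R12e c (x ⊗ₜ[k] y) = (x ⊗ₜ[k] y) ⊗ₜ[k] c := rfl

@[simp]
lemma R13e_tmul (x y : A) : R13e c (x ⊗ₜ[k] y) = (x ⊗ₜ[k] c) ⊗ₜ[k] y := by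
  simp [R13e, R23e]

@[simp]
lemma R23e_tmul (x y : A) : R23e c (x ⊗ₜ[k] y) = (c ⊗ₜ[k] x) ⊗ₜ[k] y := by
  simp [R23e]

lemma R12e_add (X Y : A ⊗[k] A) : R12e c (X + Y) = R12e c X + R12e c Y := by
  simp [R12e, add_tmul]

lemma R13e_add (X Y : A ⊗[k] A) : R13e c (X + Y) = R13e c X + R13e c Y := by
  simp [R13e, R23e, tmul_add]

lemma R23e_add (X Y : A ⊗[k] A) : R23e c (X + Y) = R23e c X + R23e c Y := by
  simp [R23e, tmul_add]

variable {μ c} {α : A →ₗ[k] A}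

section WeakUnit

variable (hcl : ∀ x : A, μ c x = α x) (hcr : ∀ x : A, μ x c = α x)
include hcl hcr

lemma mulT3_mulT3_R12e_R13e_R23e_tmul (x x' y y' z z' : A) :
    mulT3 μ (mulT3 μ (R12e c (x ⊗ₜ x')) (R13e c (y ⊗ₜ y'))) (R23e c (z ⊗ₜ z'))
      = (α (μ x y) ⊗ₜ μ (α x') z) ⊗ₜ μ (α y') z' := by
  simp [hcl, hcr]

lemma mulT3_R12e_mulT3_R13e_R23e_tmul (x x' y y' z z' : A) :
    mulT3 μ (R12e c (x ⊗ₜ x')) (mulT3 μ (R13e c (y ⊗ₜ y')) (R23e c (z ⊗ₜ z')))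
      = (μ x (α y) ⊗ₜ μ x' (α z)) ⊗ₜ α (μ y' z') := by
  simp [hcl, hcr]

lemma mulT3_R23e_mulT3_R13e_R12e_tmul (x x' y y' z z' : A) :
    mulT3 μ (R23e c (z ⊗ₜ z')) (mulT3 μ (R13e c (y ⊗ₜ y')) (R12e c (x ⊗ₜ x')))
      = (α (μ y x) ⊗ₜ μ z (α x')) ⊗ₜ μ z' (α y') := by
  simp [hcl, hcr]

lemma mulT3_mulT3_R23e_R13e_R12e_tmul (x x' y y' z z' : A) :
    mulT3 μ (mulT3 μ (R23e c (z ⊗ₜ z')) (R13e c (y ⊗ₜ y'))) (R12e c (x ⊗ₜ x'))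
      = (μ (α y) x ⊗ₜ μ (α z) x') ⊗ₜ α (μ z' y') := by
  simp [hcl, hcr]

variable (hαμ : ∀ x y : A, α (μ x y) = μ (α x) (α y))
include hαμ

lemma mulT3_mulT3_R12e_R13e_R23e_map (X Y Z : A ⊗[k] A) :
    mulT3 μ (mulT3 μ (R12e c X) (R13e c Y)) (R23e c (map α α Z))
      = mulT3 μ (R12e c (map α α X)) (mulT3 μ (R13e c Y) (R23e c Z)) := by
  induction X using TensorProduct.induction_on with
  | zero => simp [mulT3, R12e]
  | add X X' hX hX' => simp only [map_add, R12e_add, mulT3_add_left, hX, hX']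
  | tmul x x' =>
    induction Y using TensorProduct.induction_on with
    | zero => simp [mulT3, R13e, R23e]
    | add Y Y' hY hY' => simp only [R13e_add, mulT3_add_left, mulT3_add_right, hY, hY']
    | tmul y y' =>
      induction Z using TensorProduct.induction_on with
      | zero => simp [mulT3, R23e]
      | add Z Z' hZ hZ' => simp only [map_add, R23e_add, mulT3_add_right, hZ, hZ']
      | tmul z z' =>
        rw [map_tmul, map_tmul, mulT3_mulT3_R12e_R13e_R23e_tmul hcl hcr,
          mulT3_R12e_mulT3_R13e_R23e_tmul hcl hcr, hαμ, hαμ]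

lemma mulT3_R23e_mulT3_R13e_R12e_map (X Y Z : A ⊗[k] A) :
    mulT3 μ (R23e c (map α α Z)) (mulT3 μ (R13e c Y) (R12e c X))
      = mulT3 μ (mulT3 μ (R23e c Z) (R13e c Y)) (R12e c (map α α X)) := by
  induction X using TensorProduct.induction_on with
  | zero => simp [mulT3, R12e]
  | add X X' hX hX' => simp only [map_add, R12e_add, mulT3_add_right, hX, hX']
  | tmul x x' =>
    induction Y using TensorProduct.induction_on with
    | zero => simp [mulT3, R13e, R23e]
    | add Y Y' hY hY' => simp only [R13e_add, mulT3_add_left, mulT3_add_right, hY, hY']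
    | tmul y y' =>
      induction Z using TensorProduct.induction_on with
      | zero => simp [mulT3, R23e]
      | add Z Z' hZ hZ' => simp only [map_add, R23e_add, mulT3_add_left, hZ, hZ']
      | tmul z z' =>
        rw [map_tmul, map_tmul, mulT3_R23e_mulT3_R13e_R12e_tmul hcl hcr,
          mulT3_mulT3_R23e_R13e_R12e_tmul hcl hcr, hαμ, hαμ]

end WeakUnit

end

theorem qhybe_expressions_coincide_of_alpha_invariant_general
    (μ : A →ₗ[k] A →ₗ[k] A) (α : A →ₗ[k] A) (c : A) (R : A ⊗[k] A)
    (hαμ : ∀ x y : A, α (μ x y) = μ (α x) (α y))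
    (hcl : ∀ x : A, μ c x = α x) (hcr : ∀ x : A, μ x c = α x)
    -- α-invariance of R:
    (hinv : TensorProduct.map α α R = R) :
    (mulT3 μ (mulT3 μ (R12e c R) (R13e c R)) (R23e c R)
        = mulT3 μ (R12e c R) (mulT3 μ (R13e c R) (R23e c R))) ∧
    (mulT3 μ (R23e c R) (mulT3 μ (R13e c R) (R12e c R))
        = mulT3 μ (mulT3 μ (R23e c R) (R13e c R)) (R12e c R)) := by
  have h₁ := mulT3_mulT3_R12e_R13e_R23e_map hcl hcr hαμ R R R
  have h₂ := mulT3_R23e_mulT3_R13e_R12e_map hcl hcr hαμ R R R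
  rw [hinv] at h₁ h₂
  exact ⟨h₁, h₂⟩

/-- If `R` is `α`-invariant, then the two quantum Hom-Yang-Baxter
expressions coincide: `(R₁₂ R₁₃) R₂₃ = R₁₂ (R₁₃ R₂₃)` and
`R₂₃ (R₁₃ R₁₂) = (R₂₃ R₁₃) R₁₂`. -/
theorem qhybe_expressions_coincide_of_alpha_invariant
    (μ : A →ₗ[k] A →ₗ[k] A) (Δ : A →ₗ[k] A ⊗[k] A) (α : A →ₗ[k] A) (c : A) (R : A ⊗[k] A)
    (hαμ : ∀ x y : A, α (μ x y) = μ (α x) (α y))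
    (hassoc : ∀ x y z : A, μ (μ x y) (α z) = μ (α x) (μ y z))
    (hαΔ : Δ ∘ₗ α = TensorProduct.map α α ∘ₗ Δ)
    (hcoassoc : (TensorProduct.assoc k A A A).toLinearMap ∘ₗ TensorProduct.map Δ α ∘ₗ Δ
      = TensorProduct.map α Δ ∘ₗ Δ)
    (hcompat : ∀ x y : A, Δ (μ x y) = mulT2 μ (Δ x) (Δ y))
    (hcl : ∀ x : A, μ c x = α x) (hcr : ∀ x : A, μ x c = α x)
    -- α-invariance of R:
    (hinv : TensorProduct.map α α R = R)
    (hR1 : TensorProduct.map Δ α R = mulT3 μ (R13e c R) (R23e c R))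
    (hR2 : (TensorProduct.assoc k A A A).symm (TensorProduct.map α Δ R)
      = mulT3 μ (R13e c R) (R12e c R))
    (hR3 : ∀ x : A, mulT2 μ ((TensorProduct.comm k A A) (Δ x)) R = mulT2 μ R (Δ x)) :
    (mulT3 μ (mulT3 μ (R12e c R) (R13e c R)) (R23e c R)
        = mulT3 μ (R12e c R) (mulT3 μ (R13e c R) (R23e c R))) ∧
    (mulT3 μ (R23e c R) (mulT3 μ (R13e c R) (R12e c R))
        = mulT3 μ (mulT3 μ (R23e c R) (R13e c R)) (R12e c R)) :=
  qhybe_expressions_coincide_of_alpha_invariant_general μ α c R hαμ hcl hcr hinv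
end

section
/- Let (A, μ_A, α_A) be a Hom-associative algebra with weak unit, (M, α_M) an A-module, and (A, μ, Δ, α_A, c, R) a quasi-triangular Hom-bialgebra with R = Σ sᵢ ⊗ tᵢ satisfying (α_A ⊗ α_A)(R) = R (α-invariance). Then the operator B : M ⊗ M → M ⊗ M defined by B(v ⊗ w) = Σ tᵢ·w ⊗ sᵢ·v is a solution of the Hom-Yang-Baxter equation for (M, α_M): B commutes with α_M ⊗ α_M and (α_M ⊗ B)(B ⊗ α_M)(α_M ⊗ B) = (B ⊗ α_M)(α_M ⊗ B)(B ⊗ α_M) on M ⊗ M ⊗ M. -/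
open TensorProduct

variable {k : Type*} [CommRing k] {A : Type*} [AddCommGroup A] [Module k A]

variable {M : Type*} [AddCommGroup M] [Module k M]

/-- The action of `R ∈ A ⊗ A` on `M ⊗ M` followed by the twist:
`B(v ⊗ w) = Σ tᵢ·w ⊗ sᵢ·v` for `R = Σ sᵢ ⊗ tᵢ`. -/
noncomputable def Bop (lam : A →ₗ[k] M →ₗ[k] M) (R : A ⊗[k] A) :
    M ⊗[k] M →ₗ[k] M ⊗[k] M :=
  (TensorProduct.comm k M M).toLinearMap ∘ₗ
    (TensorProduct.homTensorHomMap (RingHom.id k) M M M M) (TensorProduct.map lam lam R)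

/-! Both sides of the Hom-Yang–Baxter equation, evaluated on `u ⊗ v ⊗ w`, are the action on
`α_M² w ⊗ α_M² v ⊗ α_M² u` of triple sums over the components of `R = Σ sᵢ ⊗ tᵢ`; the module
axioms dictate the powers of `α` in these sums, and α-invariance of `R` lets us put `α` on both legs
of any component. The two triple sums agree by a Hom version of the quantum Yang–Baxter equation
`R₃₂R₃₁R₂₁ = R₂₁R₃₁R₃₂`: by `(α ⊗ Δ)(R) = R₁₃R₁₂`, multiplying the last two legs of `R₁₃R₁₂` on
the right by `τR`, or flipping them and multiplying on the left by `τR`, gives the same result,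
since `Δ(x)·τR = τR·τΔ(x)`. -/

section TensorAlgebra

variable (μ : A →ₗ[k] A →ₗ[k] A)

noncomputable def mulT2ₗ : A ⊗[k] A →ₗ[k] A ⊗[k] A →ₗ[k] A ⊗[k] A :=
  (TensorProduct.mk k _ _).compr₂
    (map (lift μ) (lift μ) ∘ₗ (tensorTensorTensorComm k A A A A).toLinearMap)

theorem mulT2ₗ_apply (X Y : A ⊗[k] A) : mulT2ₗ μ X Y = mulT2 μ X Y := rfl

@[simp]
theorem mulT2_tmul (a b a' b' : A) :
    mulT2 μ (a ⊗ₜ b) (a' ⊗ₜ b') = μ a a' ⊗ₜ μ b b' := by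
  simp [mulT2]

theorem comm_mulT2 (X Y : A ⊗[k] A) :
    TensorProduct.comm k A A (mulT2 μ X Y) =
      mulT2 μ (TensorProduct.comm k A A X) (TensorProduct.comm k A A Y) := by
  have : (mulT2ₗ μ).compr₂ (TensorProduct.comm k A A).toLinearMap =
      (mulT2ₗ μ).compl₁₂ (TensorProduct.comm k A A).toLinearMap
        (TensorProduct.comm k A A).toLinearMap := by
    ext a b a' b'
    simp [mulT2ₗ_apply]
  exact congr($this X Y)

theorem mulT3_R13e_R12e_eq_sum {α : A →ₗ[k] A} {c : A} (hcl : ∀ x, μ c x = α x)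
    (hcr : ∀ x, μ x c = α x) {R : A ⊗[k] A} {S : Finset (A × A)}
    (hS : R = ∑ p ∈ S, p.1 ⊗ₜ p.2) :
    mulT3 μ (R13e c R) (R12e c R) = ∑ q ∈ S, ∑ r ∈ S, (μ r.1 q.1 ⊗ₜ α q.2) ⊗ₜ α r.2 := by
  simp [R13e, R23e, R12e, hS, mulT3, tmul_sum, sum_tmul, hcl, hcr]

theorem eq_sum_map_of_map_eq {R : A ⊗[k] A} {f : A →ₗ[k] A} (hf : map f f R = R)
    {ι : Type*} {S : Finset ι} {s t : ι → A} (hR : R = ∑ i ∈ S, s i ⊗ₜ t i) :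
    R = ∑ i ∈ S, f (s i) ⊗ₜ f (t i) := by
  rw [← hf, hR]
  simp

theorem map_comm_map_eq_of_comp_eq {Δ : A →ₗ[k] A ⊗[k] A} {f g : A ⊗[k] A →ₗ[k] A ⊗[k] A}
    (hfg : f ∘ₗ Δ = g ∘ₗ Δ) (α : A →ₗ[k] A) (W : A ⊗[k] A) :
    map f α (TensorProduct.comm k A (A ⊗[k] A) (map α Δ W)) =
      map g α (TensorProduct.comm k A (A ⊗[k] A) (map α Δ W)) := by
  suffices map f α ∘ₗ (TensorProduct.comm k A (A ⊗[k] A)).toLinearMap ∘ₗ map α Δ =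
      map g α ∘ₗ (TensorProduct.comm k A (A ⊗[k] A)).toLinearMap ∘ₗ map α Δ from
    congr($this W)
  ext a b
  simpa using congr($hfg b ⊗ₜ[k] α (α a))

theorem hom_qybe_of_quasitriangular {Δ : A →ₗ[k] A ⊗[k] A} {α : A →ₗ[k] A} {c : A} {R : A ⊗[k] A}
    (hαμ : ∀ x y : A, α (μ x y) = μ (α x) (α y))
    (hcl : ∀ x : A, μ c x = α x) (hcr : ∀ x : A, μ x c = α x)
    (hR2 : (TensorProduct.assoc k A A A).symm (TensorProduct.map α Δ R)
      = mulT3 μ (R13e c R) (R12e c R))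
    (hR3 : ∀ x : A, mulT2 μ ((TensorProduct.comm k A A) (Δ x)) R = mulT2 μ R (Δ x))
    (hinv : TensorProduct.map α α R = R) {S : Finset (A × A)}
    (hS : R = ∑ p ∈ S, p.1 ⊗ₜ p.2) :
    ∑ p ∈ S, ∑ q ∈ S, ∑ r ∈ S,
        (μ (α q.2) (α p.2) ⊗ₜ[k] μ (α r.2) (α p.1)) ⊗ₜ[k] μ (α r.1) (α q.1) =
      ∑ p ∈ S, ∑ q ∈ S, ∑ r ∈ S,
        (μ r.2 (α q.2) ⊗ₜ[k] μ r.1 (α p.2)) ⊗ₜ[k] μ (α q.1) (α p.1) := by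
  set τR := TensorProduct.comm k A A R
  have hcocomm : (mulT2ₗ μ).flip τR ∘ₗ Δ =
      (mulT2ₗ μ τR ∘ₗ (TensorProduct.comm k A A).toLinearMap) ∘ₗ Δ := by
    ext x
    have := congr(TensorProduct.comm k A A $(hR3 x))
    rw [comm_mulT2, comm_mulT2, comm_comm] at this
    simpa [mulT2ₗ_apply] using this
  set Z := (TensorProduct.comm k A (A ⊗[k] A)) (TensorProduct.assoc k A A A
    (mulT3 μ (R13e c R) (R12e c R)))
  have key : map ((mulT2ₗ μ).flip τR) α Z =
      map (mulT2ₗ μ τR ∘ₗ (TensorProduct.comm k A A).toLinearMap) α Z := by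
    simp only [Z, ← hR2, LinearEquiv.apply_symm_apply]
    exact map_comm_map_eq_of_comp_eq hcocomm α R
  have hZ : Z = ∑ q ∈ S, ∑ r ∈ S, (α q.2 ⊗ₜ α r.2) ⊗ₜ μ r.1 q.1 := by
    simp [Z, mulT3_R13e_R12e_eq_sum μ hcl hcr hS]
  have hX : map ((mulT2ₗ μ).flip τR) α Z = ∑ q ∈ S, ∑ r ∈ S, ∑ p ∈ S,
      (μ (α q.2) (α p.2) ⊗ₜ[k] μ (α r.2) (α p.1)) ⊗ₜ[k] μ (α r.1) (α q.1) := by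
    have hτR : τR = ∑ p ∈ S, α p.2 ⊗ₜ α p.1 := by simp [τR, eq_sum_map_of_map_eq hinv hS]
    simp [hZ, hτR, mulT2ₗ_apply, sum_tmul, hαμ]
  have hY : map (mulT2ₗ μ τR ∘ₗ (TensorProduct.comm k A A).toLinearMap) α Z =
      ∑ p ∈ S, ∑ q ∈ S, ∑ r ∈ S,
        (μ r.2 (α q.2) ⊗ₜ[k] μ r.1 (α p.2)) ⊗ₜ[k] μ (α q.1) (α p.1) := by
    have hτR : τR = ∑ p ∈ S, p.2 ⊗ₜ p.1 := by simp [τR, hS]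
    simp [hZ, hτR, mulT2ₗ_apply, sum_tmul, hαμ]
  rw [← hY, ← key, hX, Finset.sum_comm_cycle, Finset.sum_comm_cycle]

end TensorAlgebra

section Module

variable (lam : A →ₗ[k] M →ₗ[k] M) (αM : M →ₗ[k] M)

theorem Bop_tmul_of_eq_sum {ι : Type*} {R : A ⊗[k] A} {S : Finset ι} {s t : ι → A}
    (hR : R = ∑ i ∈ S, s i ⊗ₜ t i) (x y : M) :
    Bop lam R (x ⊗ₜ y) = ∑ i ∈ S, lam (t i) y ⊗ₜ lam (s i) x := by
  simp [Bop, hR, homTensorHomMap_apply]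

theorem map_comp_Bop {α : A →ₗ[k] A} {R : A ⊗[k] A} (hinv : map α α R = R)
    (hmod2 : ∀ a x, αM (lam a x) = lam (α a) (αM x)) :
    map αM αM ∘ₗ Bop lam R = Bop lam R ∘ₗ map αM αM := by
  obtain ⟨S, hS⟩ := TensorProduct.exists_finset R
  ext x y
  simp only [AlgebraTensorModule.curry_apply, curry_apply, LinearMap.coe_restrictScalars,
    LinearMap.coe_comp, Function.comp_apply, map_tmul]
  rw [Bop_tmul_of_eq_sum lam hS, Bop_tmul_of_eq_sum lam (eq_sum_map_of_map_eq hinv hS), map_sum]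
  simp only [map_tmul, hmod2]

noncomputable def braid₁₂ (B : M ⊗[k] M →ₗ[k] M ⊗[k] M) :
    (M ⊗[k] M) ⊗[k] M →ₗ[k] (M ⊗[k] M) ⊗[k] M :=
  map B αM

noncomputable def braid₂₃ (B : M ⊗[k] M →ₗ[k] M ⊗[k] M) :
    (M ⊗[k] M) ⊗[k] M →ₗ[k] (M ⊗[k] M) ⊗[k] M :=
  (TensorProduct.assoc k M M M).symm.toLinearMap ∘ₗ map αM B ∘ₗ
    (TensorProduct.assoc k M M M).toLinearMap

theorem braid₁₂_Bop_tmul {ι : Type*} {R : A ⊗[k] A} {S : Finset ι} {s t : ι → A}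
    (hR : R = ∑ i ∈ S, s i ⊗ₜ t i) (x y z : M) :
    braid₁₂ αM (Bop lam R) ((x ⊗ₜ y) ⊗ₜ z) = ∑ i ∈ S, (lam (t i) y ⊗ₜ lam (s i) x) ⊗ₜ αM z := by
  simp [braid₁₂, Bop_tmul_of_eq_sum lam hR, sum_tmul]

theorem braid₂₃_Bop_tmul {ι : Type*} {R : A ⊗[k] A} {S : Finset ι} {s t : ι → A}
    (hR : R = ∑ i ∈ S, s i ⊗ₜ t i) (x y z : M) :
    braid₂₃ αM (Bop lam R) ((x ⊗ₜ y) ⊗ₜ z) = ∑ i ∈ S, (αM x ⊗ₜ lam (t i) z) ⊗ₜ lam (s i) y := by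
  simp [braid₂₃, Bop_tmul_of_eq_sum lam hR, tmul_sum]

variable {lam αM} {μ : A →ₗ[k] A →ₗ[k] A} {α : A →ₗ[k] A} {R : A ⊗[k] A} {S : Finset (A × A)}

theorem braid₂₃_braid₁₂_braid₂₃_tmul (hinv : map α α R = R)
    (hmod1 : ∀ a b x, lam (μ a b) (αM x) = lam (α a) (lam b x))
    (hmod2 : ∀ a x, αM (lam a x) = lam (α a) (αM x))
    (hS : R = ∑ p ∈ S, p.1 ⊗ₜ p.2) (u v w : M) :
    braid₂₃ αM (Bop lam R) (braid₁₂ αM (Bop lam R) (braid₂₃ αM (Bop lam R) ((u ⊗ₜ v) ⊗ₜ w))) =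
      map (map (lam.flip (αM (αM w))) (lam.flip (αM (αM v)))) (lam.flip (αM (αM u)))
        (∑ p ∈ S, ∑ q ∈ S, ∑ r ∈ S,
          (μ (α q.2) (α p.2) ⊗ₜ[k] μ (α r.2) (α p.1)) ⊗ₜ[k] μ (α r.1) (α q.1)) := by
  have hS₁ := eq_sum_map_of_map_eq hinv hS
  have hS₂ := eq_sum_map_of_map_eq hinv hS₁
  rw [braid₂₃_Bop_tmul lam αM hS, map_sum]
  simp only [braid₁₂_Bop_tmul lam αM hS₁, map_sum, braid₂₃_Bop_tmul lam αM hS₂, map_tmul,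
    LinearMap.flip_apply, hmod1, hmod2]

theorem braid₁₂_braid₂₃_braid₁₂_tmul (hinv : map α α R = R)
    (hmod1 : ∀ a b x, lam (μ a b) (αM x) = lam (α a) (lam b x))
    (hmod2 : ∀ a x, αM (lam a x) = lam (α a) (αM x))
    (hS : R = ∑ p ∈ S, p.1 ⊗ₜ p.2) (u v w : M) :
    braid₁₂ αM (Bop lam R) (braid₂₃ αM (Bop lam R) (braid₁₂ αM (Bop lam R) ((u ⊗ₜ v) ⊗ₜ w))) =
      map (map (lam.flip (αM (αM w))) (lam.flip (αM (αM v)))) (lam.flip (αM (αM u)))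
        (∑ p ∈ S, ∑ q ∈ S, ∑ r ∈ S,
          (μ r.2 (α q.2) ⊗ₜ[k] μ r.1 (α p.2)) ⊗ₜ[k] μ (α q.1) (α p.1)) := by
  have hS₁ := eq_sum_map_of_map_eq hinv hS
  rw [braid₁₂_Bop_tmul lam αM hS, map_sum]
  simp only [braid₂₃_Bop_tmul lam αM hS₁, map_sum, braid₁₂_Bop_tmul lam αM hS₁, map_tmul,
    LinearMap.flip_apply, hmod1, hmod2]

end Module

theorem module_gives_hybe_solution_general
    (μ : A →ₗ[k] A →ₗ[k] A) (Δ : A →ₗ[k] A ⊗[k] A) (α : A →ₗ[k] A) (c : A) (R : A ⊗[k] A)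
    (hαμ : ∀ x y : A, α (μ x y) = μ (α x) (α y))
    (hcl : ∀ x : A, μ c x = α x) (hcr : ∀ x : A, μ x c = α x)
    (hR2 : (TensorProduct.assoc k A A A).symm (TensorProduct.map α Δ R)
      = mulT3 μ (R13e c R) (R12e c R))
    (hR3 : ∀ x : A, mulT2 μ ((TensorProduct.comm k A A) (Δ x)) R = mulT2 μ R (Δ x))
    -- α-invariance of R:
    (hinv : TensorProduct.map α α R = R)
    -- (M, α_M) is an A-module with action lam:
    (lam : A →ₗ[k] M →ₗ[k] M) (αM : M →ₗ[k] M)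
    (hmod1 : ∀ a b : A, ∀ x : M, lam (μ a b) (αM x) = lam (α a) (lam b x))
    (hmod2 : ∀ a : A, ∀ x : M, αM (lam a x) = lam (α a) (αM x)) :
    -- B commutes with α_M ⊗ α_M:
    (TensorProduct.map αM αM ∘ₗ Bop lam R = Bop lam R ∘ₗ TensorProduct.map αM αM) ∧
    -- the Hom-Yang-Baxter equation (α ⊗ B)(B ⊗ α)(α ⊗ B) = (B ⊗ α)(α ⊗ B)(B ⊗ α)
    -- as operators on (M ⊗ M) ⊗ M:
    (((TensorProduct.assoc k M M M).symm.toLinearMap ∘ₗ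
          TensorProduct.map αM (Bop lam R) ∘ₗ (TensorProduct.assoc k M M M).toLinearMap) ∘ₗ
        TensorProduct.map (Bop lam R) αM ∘ₗ
        ((TensorProduct.assoc k M M M).symm.toLinearMap ∘ₗ
          TensorProduct.map αM (Bop lam R) ∘ₗ (TensorProduct.assoc k M M M).toLinearMap)
      = TensorProduct.map (Bop lam R) αM ∘ₗ
        ((TensorProduct.assoc k M M M).symm.toLinearMap ∘ₗ
          TensorProduct.map αM (Bop lam R) ∘ₗ (TensorProduct.assoc k M M M).toLinearMap) ∘ₗ
        TensorProduct.map (Bop lam R) αM) := by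
  obtain ⟨S, hS⟩ := TensorProduct.exists_finset R
  refine ⟨map_comp_Bop lam αM hinv hmod2, TensorProduct.ext_threefold fun u v w => ?_⟩
  have hLHS := braid₂₃_braid₁₂_braid₂₃_tmul hinv hmod1 hmod2 hS u v w
  rw [hom_qybe_of_quasitriangular μ hαμ hcl hcr hR2 hR3 hinv hS] at hLHS
  exact hLHS.trans (braid₁₂_braid₂₃_braid₁₂_tmul hinv hmod1 hmod2 hS u v w).symm

/-- If `(A, μ, Δ, α, c, R)` is a quasi-triangular Hom-bialgebra with
`α`-invariant `R` and `(M, α_M)` is an `A`-module, then `B = τ ∘ R` is a solution of the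
Hom-Yang-Baxter equation for `(M, α_M)`. -/
theorem module_gives_hybe_solution
    (μ : A →ₗ[k] A →ₗ[k] A) (Δ : A →ₗ[k] A ⊗[k] A) (α : A →ₗ[k] A) (c : A) (R : A ⊗[k] A)
    (hαμ : ∀ x y : A, α (μ x y) = μ (α x) (α y))
    (hassoc : ∀ x y z : A, μ (μ x y) (α z) = μ (α x) (μ y z))
    (hαΔ : Δ ∘ₗ α = TensorProduct.map α α ∘ₗ Δ)
    (hcoassoc : (TensorProduct.assoc k A A A).toLinearMap ∘ₗ TensorProduct.map Δ α ∘ₗ Δ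
      = TensorProduct.map α Δ ∘ₗ Δ)
    (hcompat : ∀ x y : A, Δ (μ x y) = mulT2 μ (Δ x) (Δ y))
    (hcl : ∀ x : A, μ c x = α x) (hcr : ∀ x : A, μ x c = α x)
    (hR1 : TensorProduct.map Δ α R = mulT3 μ (R13e c R) (R23e c R))
    (hR2 : (TensorProduct.assoc k A A A).symm (TensorProduct.map α Δ R)
      = mulT3 μ (R13e c R) (R12e c R))
    (hR3 : ∀ x : A, mulT2 μ ((TensorProduct.comm k A A) (Δ x)) R = mulT2 μ R (Δ x))
    -- α-invariance of R:
    (hinv : TensorProduct.map α α R = R)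
    -- (M, α_M) is an A-module with action lam:
    (lam : A →ₗ[k] M →ₗ[k] M) (αM : M →ₗ[k] M)
    (hmod1 : ∀ a b : A, ∀ x : M, lam (μ a b) (αM x) = lam (α a) (lam b x))
    (hmod2 : ∀ a : A, ∀ x : M, αM (lam a x) = lam (α a) (αM x)) :
    -- B commutes with α_M ⊗ α_M:
    (TensorProduct.map αM αM ∘ₗ Bop lam R = Bop lam R ∘ₗ TensorProduct.map αM αM) ∧
    -- the Hom-Yang-Baxter equation (α ⊗ B)(B ⊗ α)(α ⊗ B) = (B ⊗ α)(α ⊗ B)(B ⊗ α)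
    -- as operators on (M ⊗ M) ⊗ M:
    (((TensorProduct.assoc k M M M).symm.toLinearMap ∘ₗ
          TensorProduct.map αM (Bop lam R) ∘ₗ (TensorProduct.assoc k M M M).toLinearMap) ∘ₗ
        TensorProduct.map (Bop lam R) αM ∘ₗ
        ((TensorProduct.assoc k M M M).symm.toLinearMap ∘ₗ
          TensorProduct.map αM (Bop lam R) ∘ₗ (TensorProduct.assoc k M M M).toLinearMap)
      = TensorProduct.map (Bop lam R) αM ∘ₗ
        ((TensorProduct.assoc k M M M).symm.toLinearMap ∘ₗ
          TensorProduct.map αM (Bop lam R) ∘ₗ (TensorProduct.assoc k M M M).toLinearMap) ∘ₗ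
        TensorProduct.map (Bop lam R) αM) :=
  module_gives_hybe_solution_general μ Δ α c R hαμ hcl hcr hR2 hR3 hinv lam αM hmod1 hmod2
end
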